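/- Let Y : [0,1] → ℕ be an injection and define Ψ(x) := 2^{-(Y(x)+5)}. Then for any finitely many points x₀, …, x_k ∈ [0,1], the total length of the union ⋃_{i≤k} (x_i − Ψ(x_i), x_i + Ψ(x_i)) is at most 1/2; in particular this union cannot cover [0,1]. Consequently, there is no injection from [0,1] to ℕ for which Cousin's lemma holds for the gauge Ψ. -/
import Mathlib


open Set MeasureTheory

/-- If `Y : [0,1] → ℕ` is injective and `Ψ x = 2^{-(Y x + 5)}`, then any finite union of
the balls `(x - Ψ x, x + Ψ x)` with centres in `[0,1]` has measure at most `1/2`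
and cannot cover `[0,1]`. -/
theorem gauge_from_injection_no_finite_subcover (Y : ℝ → ℕ)
    (hY : Set.InjOn Y (Set.Icc (0:ℝ) 1)) :
    ∀ s : Finset ℝ, (∀ x ∈ s, x ∈ Set.Icc (0:ℝ) 1) →
      volume (⋃ x ∈ s, Set.Ioo (x - (2:ℝ)⁻¹ ^ (Y x + 5)) (x + (2:ℝ)⁻¹ ^ (Y x + 5)))
          ≤ 1/2 ∧
      ¬ Set.Icc (0:ℝ) 1 ⊆
        ⋃ x ∈ s, Set.Ioo (x - (2:ℝ)⁻¹ ^ (Y x + 5)) (x + (2:ℝ)⁻¹ ^ (Y x + 5)) := by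
  intro s hs
  have hmeas : volume (⋃ x ∈ s, Set.Ioo (x - (2:ℝ)⁻¹ ^ (Y x + 5)) (x + (2:ℝ)⁻¹ ^ (Y x + 5)))
      ≤ 1/2 := by
    calc volume (⋃ x ∈ s, Set.Ioo (x - (2:ℝ)⁻¹ ^ (Y x + 5)) (x + (2:ℝ)⁻¹ ^ (Y x + 5)))
        ≤ ∑ x ∈ s, volume (Set.Ioo (x - (2:ℝ)⁻¹ ^ (Y x + 5)) (x + (2:ℝ)⁻¹ ^ (Y x + 5))) :=
          measure_biUnion_finset_le s _
      _ = ∑ x ∈ s, (2:ENNReal)⁻¹ ^ (Y x + 4) := by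
          refine Finset.sum_congr rfl fun x hx => ?_
          rw [Real.volume_Ioo]
          have h : (x + (2:ℝ)⁻¹ ^ (Y x + 5)) - (x - (2:ℝ)⁻¹ ^ (Y x + 5))
              = (2:ℝ)⁻¹ ^ (Y x + 4) := by ring
          rw [h]
          rw [ENNReal.ofReal_pow (by norm_num)]
          congr 1
          rw [ENNReal.ofReal_inv_of_pos (by norm_num), ENNReal.ofReal_ofNat]
      _ = ∑ n ∈ s.image Y, (2:ENNReal)⁻¹ ^ (n + 4) := by
          rw [Finset.sum_image]
          intro x hx y hy hxy
          exact hY (hs x hx) (hs y hy) hxy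
      _ ≤ ∑' n : ℕ, (2:ENNReal)⁻¹ ^ (n + 4) := ENNReal.sum_le_tsum _
      _ = ∑' n : ℕ, (2:ENNReal)⁻¹ ^ n * (2:ENNReal)⁻¹ ^ 4 := by
          congr 1; ext n; rw [pow_add]
      _ = ((1 : ENNReal) - 2⁻¹)⁻¹ * (2:ENNReal)⁻¹ ^ 4 := by
          rw [ENNReal.tsum_mul_right, ENNReal.tsum_geometric]
      _ ≤ 1/2 := by
          rw [ENNReal.one_sub_inv_two, inv_inv, ← ENNReal.inv_pow]
          rw [show ((2:ENNReal)^4) = 16 by norm_num]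
          rw [show (16:ENNReal)⁻¹ = 8⁻¹ * 2⁻¹ by
            rw [← ENNReal.mul_inv (by norm_num) (by norm_num)]; norm_num]
          rw [← mul_assoc, show (2:ENNReal) * 8⁻¹ * 2⁻¹ = 8⁻¹ * (2 * 2⁻¹) by ring,
            ENNReal.mul_inv_cancel (by norm_num) (by norm_num), mul_one, one_div]
          exact ENNReal.inv_le_inv.mpr (by norm_num)
  refine ⟨hmeas, fun hcov => ?_⟩
  have h1 : (1 : ENNReal) ≤ 1/2 := by
    calc (1 : ENNReal) = volume (Set.Icc (0:ℝ) 1) := by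
          rw [Real.volume_Icc]; norm_num
      _ ≤ volume (⋃ x ∈ s, Set.Ioo (x - (2:ℝ)⁻¹ ^ (Y x + 5)) (x + (2:ℝ)⁻¹ ^ (Y x + 5))) :=
          measure_mono hcov
      _ ≤ 1/2 := hmeas
  norm_num at h1
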